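/- Fix r ∈ ℝ₊^m and a compact base B of K*. Then F_r(Ā, b̄) ≠ ∅ if and only if (0_n, 1) does not belong to the closure of cone(⋃_{λ ∈ B} { Σ_{i=1}^m λ_i ((ā_i, b̄_i) + r_i·B_{n+1}) }). -/

import Mathlib

open Finset Pointwise

noncomputable def enorm₂ {k : ℕ} (v : Fin k → ℝ) : ℝ := Real.sqrt (∑ i, v i ^ 2)

def coneHull {k : ℕ} (X : Set (Fin k → ℝ)) : Set (Fin k → ℝ) :=
  {y | y = 0 ∨ ∃ t : ℝ, 0 ≤ t ∧ ∃ c ∈ convexHull ℝ X, y = t • c}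

def dualCone {m : ℕ} (K : Set (Fin m → ℝ)) : Set (Fin m → ℝ) :=
  {a | ∀ x ∈ K, 0 ≤ ∑ i, a i * x i}

def Feas {m n : ℕ} (K : Set (Fin m → ℝ)) (Abar : Fin m → Fin n → ℝ) (bbar : Fin m → ℝ)
    (r : Fin m → ℝ) : Set (Fin n → ℝ) :=
  {x | ∀ (a : Fin m → Fin n → ℝ) (b : Fin m → ℝ),
      (∀ i, enorm₂ (Fin.snoc (a i - Abar i) (b i - bbar i)) ≤ r i) →
      (fun i => (∑ j, a i j * x j) + b i) ∈ -K}

def Adm {m n : ℕ} (K : Set (Fin m → ℝ)) (Abar : Fin m → Fin n → ℝ) (bbar : Fin m → ℝ) :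
    Set (Fin m → ℝ) :=
  {r | (∀ i, 0 ≤ r i) ∧ (Feas K Abar bbar r).Nonempty}

noncomputable def rrf {m n : ℕ} (K : Set (Fin m → ℝ)) (Abar : Fin m → Fin n → ℝ)
    (bbar : Fin m → ℝ) : ℝ :=
  sSup {α : ℝ | 0 ≤ α ∧ (fun _ => α) ∈ Adm K Abar bbar}

def Epi {m n : ℕ} (Abar : Fin m → Fin n → ℝ) (bbar : Fin m → ℝ) (B : Set (Fin m → ℝ)) :
    Set (Fin (n + 1) → ℝ) :=
  {y | ∃ l ∈ B, ∃ w : ℝ, 0 ≤ w ∧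
    y = Fin.snoc (fun j => ∑ i, l i * Abar i j) (-(∑ i, l i * bbar i) + w)}

noncomputable def edist0 {m n : ℕ} (Abar : Fin m → Fin n → ℝ) (bbar : Fin m → ℝ)
    (B : Set (Fin m → ℝ)) : ℝ :=
  sInf {t : ℝ | ∃ y ∈ Epi Abar bbar B, t = enorm₂ y}

def IsCompactBase {m : ℕ} (C B : Set (Fin m → ℝ)) : Prop :=
  IsCompact B ∧ Convex ℝ B ∧ B ⊆ C ∧ (0 : Fin m → ℝ) ∉ B ∧
    C = {y | ∃ t : ℝ, 0 ≤ t ∧ ∃ b ∈ B, y = t • b}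

def IsClosedConvexCone {m : ℕ} (K : Set (Fin m → ℝ)) : Prop :=
  IsClosed K ∧ Convex ℝ K ∧ ∀ t : ℝ, 0 ≤ t → ∀ x ∈ K, t • x ∈ K

noncomputable def c1 {m : ℕ} (n : ℕ) (B : Set (Fin m → ℝ)) : ℝ :=
  (sSup {t : ℝ | ∃ l ∈ B, ∃ u : Fin m → (Fin (n + 1) → ℝ),
    (∀ i, enorm₂ (u i) ≤ 1) ∧ t = enorm₂ (∑ i, l i • u i)})⁻¹

noncomputable def c2 {m : ℕ} (B : Set (Fin m → ℝ)) : ℝ :=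
  (sInf {t : ℝ | ∃ l ∈ B, t = ∑ i, |l i|})⁻¹

/-!
A point `x` is robustly feasible iff, for every admissible perturbation `(a, b)`, the vector
`a x + b` lies in `-K`; by the bipolar theorem for the closed convex cone `K` this is tested by the
functionals `λ` of the base `B` of `K*`, i.e. iff `y ⬝ᵥ (x, 1) ≤ 0` for every
`y = Σ λ_i (a_i, b_i)`. So `F_r` is the solution set of a linear system `y ⬝ᵥ (x, 1) ≤ 0`, and
Hahn–Banach separation of `(0, 1)` from the closed convex cone generated by the `y`'s is the
existence theorem for such systems.
-/

lemma StrongDual.exists_eq_dotProduct {k : ℕ} (f : StrongDual ℝ (Fin k → ℝ)) :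
    ∃ w : Fin k → ℝ, ∀ y, f y = y ⬝ᵥ w := by
  refine ⟨(dotProductEquiv ℝ (Fin k)).symm (f : (Fin k → ℝ) →ₗ[ℝ] ℝ), fun y => ?_⟩
  rw [dotProduct_comm, ← dotProductEquiv_apply_apply, LinearEquiv.apply_symm_apply]
  rfl

theorem exists_dotProduct_pos_of_notMem {k : ℕ} {C : Set (Fin k → ℝ)} (hconv : Convex ℝ C)
    (hclosed : IsClosed C) (hzero : (0 : Fin k → ℝ) ∈ C)
    (hsmul : ∀ t : ℝ, 0 ≤ t → ∀ y ∈ C, t • y ∈ C) {z : Fin k → ℝ} (hz : z ∉ C) :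
    ∃ w : Fin k → ℝ, (∀ y ∈ C, y ⬝ᵥ w ≤ 0) ∧ 0 < z ⬝ᵥ w := by
  obtain ⟨f, u, hfC, hfz⟩ := geometric_hahn_banach_closed_point hconv hclosed hz
  have hu : 0 < u := by simpa using hfC 0 hzero
  have hfC_nonpos : ∀ y ∈ C, f y ≤ 0 := by
    intro y hy
    by_contra! hpos
    -- a positive value of `f` on the cone could be scaled past `u`
    have := hfC (((u + 1) / f y) • y) (hsmul _ (by positivity) y hy)
    rw [map_smul, smul_eq_mul, div_mul_cancel₀ _ hpos.ne'] at this
    linarith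
  obtain ⟨w, hw⟩ := f.exists_eq_dotProduct
  refine ⟨w, fun y hy => hw y ▸ hfC_nonpos y hy, ?_⟩
  rw [← hw]
  linarith

lemma mem_dualCone {m : ℕ} {K : Set (Fin m → ℝ)} {a : Fin m → ℝ} :
    a ∈ dualCone K ↔ ∀ x ∈ K, 0 ≤ a ⬝ᵥ x :=
  Iff.rfl

theorem mem_of_forall_mem_dualCone {m : ℕ} {K : Set (Fin m → ℝ)} (hclosed : IsClosed K)
    (hconv : Convex ℝ K) (hcone : ∀ t : ℝ, 0 ≤ t → ∀ x ∈ K, t • x ∈ K) (hK : K.Nonempty)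
    {z : Fin m → ℝ} (hz : ∀ μ ∈ dualCone K, 0 ≤ μ ⬝ᵥ z) : z ∈ K := by
  by_contra hzK
  have hzero : (0 : Fin m → ℝ) ∈ K := by
    obtain ⟨p, hp⟩ := hK
    simpa using hcone 0 le_rfl p hp
  obtain ⟨w, hwK, hwz⟩ := exists_dotProduct_pos_of_notMem hconv hclosed hzero hcone hzK
  have hneg : -w ∈ dualCone K := mem_dualCone.2 fun x hx => by
    rw [neg_dotProduct, dotProduct_comm]
    linarith [hwK x hx]
  have := hz _ hneg
  rw [neg_dotProduct, dotProduct_comm] at this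
  linarith

section coneHull

variable {k : ℕ} {X : Set (Fin k → ℝ)}

lemma zero_mem_coneHull : (0 : Fin k → ℝ) ∈ coneHull X :=
  Or.inl rfl

lemma subset_coneHull : X ⊆ coneHull X := fun y hy =>
  Or.inr ⟨1, zero_le_one, y, subset_convexHull ℝ X hy, (one_smul ℝ y).symm⟩

lemma smul_mem_coneHull {t : ℝ} (ht : 0 ≤ t) {y : Fin k → ℝ} (hy : y ∈ coneHull X) :
    t • y ∈ coneHull X := by
  rcases hy with rfl | ⟨s, hs, c, hc, rfl⟩
  · exact Or.inl (smul_zero t)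
  · exact Or.inr ⟨t * s, mul_nonneg ht hs, c, hc, smul_smul t s c⟩

lemma convex_coneHull : Convex ℝ (coneHull X) := by
  intro y hy z hz a b ha hb _
  rcases hy with rfl | ⟨s, hs, c, hc, rfl⟩
  · simpa using smul_mem_coneHull hb hz
  rcases hz with rfl | ⟨u, hu, d, hd, rfl⟩
  · simpa using smul_mem_coneHull ha (Or.inr ⟨s, hs, c, hc, rfl⟩)
  obtain ⟨e, he, hsum⟩ := (convex_convexHull ℝ X).exists_mem_add_smul_eq hc hd
    (mul_nonneg ha hs) (mul_nonneg hb hu)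
  exact Or.inr ⟨a * s + b * u, by positivity, e, he, by rw [smul_smul, smul_smul, hsum]⟩

lemma coneHull_subset_of_forall_dotProduct_nonpos {c : Fin k → ℝ}
    (h : ∀ y ∈ X, y ⬝ᵥ c ≤ 0) : coneHull X ⊆ {y | y ⬝ᵥ c ≤ 0} := by
  have hhalf : Convex ℝ {y : Fin k → ℝ | y ⬝ᵥ c ≤ 0} :=
    convex_halfSpace_le (f := fun y => y ⬝ᵥ c)
      ⟨fun y z => add_dotProduct y z c, fun t y => smul_dotProduct t y c⟩ 0
  rintro y (rfl | ⟨t, ht, d, hd, rfl⟩)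
  · simp
  · have : d ⬝ᵥ c ≤ 0 := convexHull_min h hhalf hd
    simpa [smul_dotProduct] using mul_nonpos_of_nonneg_of_nonpos ht this

end coneHull

lemma snoc_dotProduct_snoc {α : Type*} [Mul α] [AddCommMonoid α] {n : ℕ} (u v : Fin n → α)
    (a b : α) : (Fin.snoc u a : Fin (n + 1) → α) ⬝ᵥ Fin.snoc v b = u ⬝ᵥ v + a * b := by
  simp [dotProduct, Fin.sum_univ_castSucc]

lemma snoc_sub_snoc {α : Type*} [Sub α] {n : ℕ} (u v : Fin n → α) (a b : α) :
    (Fin.snoc u a : Fin (n + 1) → α) - Fin.snoc v b = Fin.snoc (u - v) (a - b) := by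
  ext j
  refine Fin.lastCases ?_ (fun j => ?_) j <;> simp

theorem exists_forall_dotProduct_snoc_nonpos_iff {n : ℕ} (S : Set (Fin (n + 1) → ℝ)) :
    (∃ x : Fin n → ℝ, ∀ y ∈ S, y ⬝ᵥ Fin.snoc x 1 ≤ 0) ↔
      (Pi.single (Fin.last n) 1 : Fin (n + 1) → ℝ) ∉ closure (coneHull S) := by
  constructor
  · rintro ⟨x, hx⟩ hmem
    have hclosed : IsClosed {y : Fin (n + 1) → ℝ | y ⬝ᵥ Fin.snoc x 1 ≤ 0} :=
      isClosed_le (by fun_prop) continuous_const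
    have := closure_minimal (coneHull_subset_of_forall_dotProduct_nonpos hx) hclosed hmem
    norm_num [single_dotProduct] at this
  · intro hnot
    have hsmul : ∀ t : ℝ, 0 ≤ t → ∀ y ∈ closure (coneHull S), t • y ∈ closure (coneHull S) :=
      fun t ht y hy => map_mem_closure (continuous_const_smul t) hy
        fun _ hz => smul_mem_coneHull ht hz
    obtain ⟨w, hwS, hwlast⟩ := exists_dotProduct_pos_of_notMem convex_coneHull.closure
      isClosed_closure (subset_closure zero_mem_coneHull) hsmul hnot
    rw [single_dotProduct, one_mul] at hwlast
    -- normalise the separating functional so that its last coordinate is `1`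
    have hsnoc : Fin.snoc ((w (Fin.last n))⁻¹ • Fin.init w) 1 = (w (Fin.last n))⁻¹ • w := by
      ext j
      refine Fin.lastCases ?_ (fun j => ?_) j
      · simp [hwlast.ne']
      · simp [Fin.init]
    refine ⟨(w (Fin.last n))⁻¹ • Fin.init w, fun y hy => ?_⟩
    rw [hsnoc, dotProduct_smul, smul_eq_mul]
    exact mul_nonpos_of_nonneg_of_nonpos (inv_nonneg.2 hwlast.le)
      (hwS y (subset_closure (subset_coneHull hy)))

-- the set `⋃_{λ ∈ B} Σ_i λ_i ((ā_i, b̄_i) + r_i 𝔹)`, with `(ā_i, b̄_i)` encoded as `Fin.snoc`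
def perturbedCombinations {m n : ℕ} (B : Set (Fin m → ℝ)) (Abar : Fin m → Fin n → ℝ)
    (bbar : Fin m → ℝ) (r : Fin m → ℝ) : Set (Fin (n + 1) → ℝ) :=
  {y | ∃ l ∈ B, ∃ v : Fin m → (Fin (n + 1) → ℝ),
    (∀ i, enorm₂ (v i - Fin.snoc (Abar i) (bbar i)) ≤ r i) ∧ y = ∑ i, l i • v i}

lemma sum_smul_snoc_dotProduct {α : Type*} [CommSemiring α] {m n : ℕ} (l : Fin m → α)
    (a : Fin m → Fin n → α) (b : Fin m → α) (x : Fin n → α) :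
    (∑ i, l i • (Fin.snoc (a i) (b i) : Fin (n + 1) → α)) ⬝ᵥ Fin.snoc x 1 =
      l ⬝ᵥ fun i => a i ⬝ᵥ x + b i := by
  simp only [sum_dotProduct, smul_dotProduct, snoc_dotProduct_snoc, mul_one]
  rfl

theorem mem_Feas_iff {m n : ℕ} {K : Set (Fin m → ℝ)} (hclosed : IsClosed K)
    (hconv : Convex ℝ K) (hcone : ∀ t : ℝ, 0 ≤ t → ∀ x ∈ K, t • x ∈ K) (hK : K.Nonempty)
    {B : Set (Fin m → ℝ)} (hBK : B ⊆ dualCone K)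
    (hKB : dualCone K ⊆ {y | ∃ t : ℝ, 0 ≤ t ∧ ∃ b ∈ B, y = t • b})
    (Abar : Fin m → Fin n → ℝ) (bbar : Fin m → ℝ) (r : Fin m → ℝ) (x : Fin n → ℝ) :
    x ∈ Feas K Abar bbar r ↔
      ∀ y ∈ perturbedCombinations B Abar bbar r, y ⬝ᵥ Fin.snoc x 1 ≤ 0 := by
  constructor
  · rintro hx _ ⟨l, hl, v, hv, rfl⟩
    obtain ⟨a, b, rfl⟩ : ∃ a b, v = fun i => Fin.snoc (a i) (b i) :=
      ⟨fun i => Fin.init (v i), fun i => v i (Fin.last n),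
        funext fun i => (Fin.snoc_init_self _).symm⟩
    have hax := hx a b fun i => by simpa only [snoc_sub_snoc] using hv i
    have := mem_dualCone.1 (hBK hl) _ (Set.mem_neg.1 hax)
    rw [dotProduct_neg] at this
    rw [sum_smul_snoc_dotProduct]
    exact neg_nonneg.1 this
  · intro h a b hab
    refine Set.mem_neg.2 (mem_of_forall_mem_dualCone hclosed hconv hcone hK fun μ hμ => ?_)
    obtain ⟨t, ht, l, hl, rfl⟩ := hKB hμ
    have := h _ ⟨l, hl, fun i => Fin.snoc (a i) (b i),
      fun i => by simpa only [snoc_sub_snoc] using hab i, rfl⟩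
    rw [sum_smul_snoc_dotProduct] at this
    rw [smul_dotProduct, dotProduct_neg, smul_eq_mul]
    exact mul_nonneg ht (neg_nonneg.2 this)

theorem statement9_general {m n : ℕ} (K : Set (Fin m → ℝ)) (hclosed : IsClosed K) (hconv : Convex ℝ K)
    (hcone : ∀ t : ℝ, 0 ≤ t → ∀ x ∈ K, t • x ∈ K)
    (hint : (interior K).Nonempty)
    (B : Set (Fin m → ℝ)) (hB : IsCompactBase (dualCone K) B)
    (Abar : Fin m → Fin n → ℝ) (bbar : Fin m → ℝ) (r : Fin m → ℝ) :
    (Feas K Abar bbar r).Nonempty ↔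
      (Pi.single (Fin.last n) 1 : Fin (n + 1) → ℝ) ∉
        closure (coneHull {y : Fin (n + 1) → ℝ | ∃ l ∈ B, ∃ v : Fin m → (Fin (n + 1) → ℝ),
          (∀ i, enorm₂ (v i - Fin.snoc (Abar i) (bbar i)) ≤ r i) ∧ y = ∑ i, l i • v i}) := by
  obtain ⟨-, -, hBK, -, hKB⟩ := hB
  have hFeas := mem_Feas_iff hclosed hconv hcone (hint.mono interior_subset) hBK hKB.le
    Abar bbar r
  simp only [Set.Nonempty, hFeas]
  exact exists_forall_dotProduct_snoc_nonpos_iff (perturbedCombinations B Abar bbar r)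

/-- dual characterization of nonemptiness of the robust feasible set. -/
theorem statement9 {m n : ℕ} (K : Set (Fin m → ℝ)) (hclosed : IsClosed K) (hconv : Convex ℝ K)
    (hcone : ∀ t : ℝ, 0 ≤ t → ∀ x ∈ K, t • x ∈ K)
    (hpointed : K ∩ (-K) = {0}) (hint : (interior K).Nonempty)
    (B : Set (Fin m → ℝ)) (hB : IsCompactBase (dualCone K) B)
    (Abar : Fin m → Fin n → ℝ) (bbar : Fin m → ℝ) (r : Fin m → ℝ) (hr : ∀ i, 0 ≤ r i) :
    (Feas K Abar bbar r).Nonempty ↔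
      (Pi.single (Fin.last n) 1 : Fin (n + 1) → ℝ) ∉
        closure (coneHull {y : Fin (n + 1) → ℝ | ∃ l ∈ B, ∃ v : Fin m → (Fin (n + 1) → ℝ),
          (∀ i, enorm₂ (v i - Fin.snoc (Abar i) (bbar i)) ≤ r i) ∧ y = ∑ i, l i • v i}) :=
  statement9_general K hclosed hconv hcone hint B hB Abar bbar r
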